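/- Deterministic estimation error bound for the errors-in-variables Lasso: suppose θ̂ minimizes (1/2)θᵀΓ̂θ − ⟨γ̂, θ⟩ over ‖θ‖₁ ≤ R, ‖θ*‖₁ ≤ R, Σ is symmetric with λ_min(Σ) > 0, max_{i,j}|Γ̂_{ij} − Σ_{ij}| ≤ μ, and ‖γ̂ − Γ̂θ*‖_∞ ≤ λ. Then λ_min(Σ)‖θ̂ − θ*‖₂² ≤ 4Rλ + 8R²μ. -/
import Mathlib


open Matrix

/-- Deterministic estimation error bound for the errors-in-variables Lasso: if `θ̂`
minimizes `(1/2)θᵀΓ̂θ - ⟨γ̂, θ⟩` over `‖θ‖₁ ≤ R`, `‖θ*‖₁ ≤ R`, `Σ` is symmetric with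
minimum eigenvalue `lam > 0`, `max_{i,j}|Γ̂ᵢⱼ - Σᵢⱼ| ≤ μ`, and `‖γ̂ - Γ̂θ*‖∞ ≤ λ`,
then `lam ‖θ̂ - θ*‖₂² ≤ 4Rλ + 8R²μ`. -/
theorem lasso_estimation_error
    {d : ℕ} (Γ Sig : Matrix (Fin d) (Fin d) ℝ) (hΓ : Γ.IsSymm) (hSig : Sig.IsSymm)
    (γ θstar θhat : Fin d → ℝ) (R lam μ lambda : ℝ)
    (hR : 0 < R) (hlam : 0 < lam) (hμ : 0 < μ) (hlambda : 0 < lambda)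
    (hmineig : ∀ v : Fin d → ℝ, lam * ∑ i, (v i) ^ 2 ≤ v ⬝ᵥ Sig.mulVec v)
    (hentry : ∀ i j, |Γ i j - Sig i j| ≤ μ)
    (hθstar : ∑ i, |θstar i| ≤ R)
    (hθhat : ∑ i, |θhat i| ≤ R)
    (hmin : ∀ θ : Fin d → ℝ, ∑ i, |θ i| ≤ R →
      (1 / 2) * (θhat ⬝ᵥ Γ.mulVec θhat) - γ ⬝ᵥ θhat
        ≤ (1 / 2) * (θ ⬝ᵥ Γ.mulVec θ) - γ ⬝ᵥ θ)
    (hcross : ‖γ - Γ.mulVec θstar‖ ≤ lambda) :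
    lam * ∑ i, (θhat i - θstar i) ^ 2 ≤ 4 * R * lambda + 8 * R ^ 2 * μ := by
  set v : Fin d → ℝ := θhat - θstar with hv
  have hΓsym : ∀ i j, Γ j i = Γ i j := by
    intro i j
    have := congrFun (congrFun hΓ j) i
    simpa [Matrix.transpose_apply] using this.symm
  have hsymm : ∀ x y : Fin d → ℝ, x ⬝ᵥ Γ.mulVec y = y ⬝ᵥ Γ.mulVec x := by
    intro x y
    simp only [dotProduct, Matrix.mulVec, dotProduct, Finset.mul_sum]
    rw [Finset.sum_comm]
    apply Finset.sum_congr rfl; intro i _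
    apply Finset.sum_congr rfl; intro j _
    rw [hΓsym i j]; ring
  -- ℓ1 norm of v bounded by 2R
  have hB : ∑ i, |v i| ≤ 2 * R := by
    calc ∑ i, |v i| ≤ ∑ i, (|θhat i| + |θstar i|) := by
          apply Finset.sum_le_sum; intro i _
          simpa [hv] using abs_sub (θhat i) (θstar i)
      _ = (∑ i, |θhat i|) + ∑ i, |θstar i| := Finset.sum_add_distrib
      _ ≤ 2 * R := by linarith
  have hBnn : 0 ≤ ∑ i, |v i| := Finset.sum_nonneg fun i _ => abs_nonneg _
  -- basic inequality
  have key := hmin θstar hθstar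
  have hexp : v ⬝ᵥ Γ.mulVec v
      = θhat ⬝ᵥ Γ.mulVec θhat - 2 * (θstar ⬝ᵥ Γ.mulVec θhat) + θstar ⬝ᵥ Γ.mulVec θstar := by
    have : v ⬝ᵥ Γ.mulVec v
        = θhat ⬝ᵥ Γ.mulVec θhat - θhat ⬝ᵥ Γ.mulVec θstar
          - (θstar ⬝ᵥ Γ.mulVec θhat - θstar ⬝ᵥ Γ.mulVec θstar) := by
      simp only [hv, Matrix.mulVec_sub, sub_dotProduct, dotProduct_sub]
      ring
    rw [this, hsymm θhat θstar]; ring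
  set w : Fin d → ℝ := γ - Γ.mulVec θstar with hw
  have hbasic : (1/2) * (v ⬝ᵥ Γ.mulVec v) ≤ w ⬝ᵥ v := by
    have hwv : w ⬝ᵥ v = γ ⬝ᵥ θhat - γ ⬝ᵥ θstar
        - (θstar ⬝ᵥ Γ.mulVec θhat) + θstar ⬝ᵥ Γ.mulVec θstar := by
      have h1 : (Γ.mulVec θstar) ⬝ᵥ v = θstar ⬝ᵥ Γ.mulVec v := by
        rw [dotProduct_comm, hsymm]
      have h2 : θstar ⬝ᵥ Γ.mulVec v
          = θstar ⬝ᵥ Γ.mulVec θhat - θstar ⬝ᵥ Γ.mulVec θstar := by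
        simp [hv, Matrix.mulVec_sub, dotProduct_sub]
      have h0 : w ⬝ᵥ v = γ ⬝ᵥ v - (Γ.mulVec θstar) ⬝ᵥ v := by
        simp [hw, sub_dotProduct]
      rw [h0, h1, h2, hv, dotProduct_sub]
      ring
    rw [hexp, hwv]
    linarith
  -- dot product bound
  have hdot : w ⬝ᵥ v ≤ lambda * ∑ i, |v i| := by
    calc w ⬝ᵥ v = ∑ i, w i * v i := rfl
      _ ≤ ∑ i, lambda * |v i| := by
          apply Finset.sum_le_sum; intro i _
          calc w i * v i ≤ |w i * v i| := le_abs_self _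
            _ = |w i| * |v i| := abs_mul _ _
            _ ≤ lambda * |v i| := by
                apply mul_le_mul_of_nonneg_right _ (abs_nonneg _)
                exact le_trans (norm_le_pi_norm w i) hcross
      _ = lambda * ∑ i, |v i| := by rw [Finset.mul_sum]
  -- entrywise perturbation bound
  have hpert : v ⬝ᵥ Sig.mulVec v - μ * (∑ i, |v i|) ^ 2 ≤ v ⬝ᵥ Γ.mulVec v := by
    have hdiff : v ⬝ᵥ Sig.mulVec v - v ⬝ᵥ Γ.mulVec v ≤ μ * (∑ i, |v i|) ^ 2 := by
      have : v ⬝ᵥ Sig.mulVec v - v ⬝ᵥ Γ.mulVec v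
          = ∑ i, ∑ j, v i * (Sig i j - Γ i j) * v j := by
        simp [dotProduct, Matrix.mulVec, Finset.mul_sum, ← Finset.sum_sub_distrib]
        apply Finset.sum_congr rfl; intro i _
        apply Finset.sum_congr rfl; intro j _
        ring
      rw [this]
      have hsq : (∑ i, |v i|) ^ 2 = ∑ i, ∑ j, |v i| * |v j| := by
        rw [sq, Finset.sum_mul_sum]
      rw [hsq, Finset.mul_sum]
      apply Finset.sum_le_sum; intro i _
      rw [Finset.mul_sum]
      apply Finset.sum_le_sum; intro j _
      calc v i * (Sig i j - Γ i j) * v j ≤ |v i * (Sig i j - Γ i j) * v j| := le_abs_self _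
        _ = |v i| * |Sig i j - Γ i j| * |v j| := by rw [abs_mul, abs_mul]
        _ ≤ |v i| * μ * |v j| := by
            apply mul_le_mul_of_nonneg_right _ (abs_nonneg _)
            apply mul_le_mul_of_nonneg_left _ (abs_nonneg _)
            rw [abs_sub_comm]; exact hentry i j
        _ = μ * (|v i| * |v j|) := by ring
    linarith
  have heig := hmineig v
  have h1 : v ⬝ᵥ Γ.mulVec v ≤ 2 * lambda * ∑ i, |v i| := by linarith
  have hB2 : (∑ i, |v i|) ^ 2 ≤ (2 * R) ^ 2 := by
    apply pow_le_pow_left₀ hBnn hB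
  have hfin : lam * ∑ i, (v i) ^ 2 ≤ 2 * lambda * (2 * R) + μ * (2 * R) ^ 2 := by
    have := mul_le_mul_of_nonneg_left hB (by positivity : (0:ℝ) ≤ 2 * lambda)
    nlinarith [hμ.le]
  have hveq : ∀ i, v i = θhat i - θstar i := fun i => rfl
  calc lam * ∑ i, (θhat i - θstar i) ^ 2 = lam * ∑ i, (v i) ^ 2 := by
        simp [hveq]
    _ ≤ 2 * lambda * (2 * R) + μ * (2 * R) ^ 2 := hfin
    _ ≤ 4 * R * lambda + 8 * R ^ 2 * μ := by nlinarith [hμ.le, hR.le, hlambda.le]
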